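/- Let α, β and α₁, β₁ be two pairs of nonzero complex numbers with |α|² + |β|² = 1 = |α₁|² + |β₁|². Then T_{α,β} and T_{α₁,β₁} are unitarily equivalent (i.e., there exists a unitary operator U on H with U T_{α,β} = T_{α₁,β₁} U) if and only if |α| = |α₁|, |β| = |β₁|, and α·conj(β) = α₁·conj(β₁) (equivalently α/α₁ = conj(β₁)/conj(β)). -/

import Mathlib

open scoped ComplexConjugate
open scoped ENNReal

noncomputable section

/-- The Hilbert space `H = ℓ²(ℕ, ℂ)`. -/
abbrev H : Type := lp (fun _ : ℕ => ℂ) 2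

/-- The standard orthonormal basis vectors of `ℓ²(ℕ, ℂ)`. -/
noncomputable def e (n : ℕ) : H := lp.single 2 n (1 : ℂ)

/-!
Write `a = α·conj β`. Since `1 - |a|² - |β|² = |α|⁴`, the operator `T = T_{α,β}` satisfies
`‖T x‖² = ‖x‖² - |α|⁴ |x₀|²`. A unitary `U` with `U T = T₁ U` therefore satisfies
`|α|⁴ |x₀|² = |α₁|⁴ |(U x)₀|²` for all `x`; testing this on `e₀` and on `U⁻¹ e₀` gives
`|α| = |α₁|`, and then `|(U e₀)₀| = 1`, so `U e₀ = c e₀` by the equality case of Cauchy–Schwarz.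
Since `U e₁ ⊥ U e₀`, the `e₀`-coordinate of `U T e₀ = T₁ U e₀` reads `a c = a₁ c`.
Conversely, if `a = a₁` and `|β| = |β₁|`, the diagonal unitary `diag(1, β₁/β, β₁/β, …)`
intertwines `T` and `T₁`.
-/

section lpSpace

variable {ι : Type*} {E : ι → Type*} [∀ i, NormedAddCommGroup (E i)] {p : ℝ≥0∞}

theorem lp.norm_eq_of_forall_norm_apply_eq [Fact (1 ≤ p)] {f g : lp E p}
    (h : ∀ i, ‖f i‖ = ‖g i‖) : ‖f‖ = ‖g‖ := by
  rcases p.dichotomy with rfl | hp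
  · simp only [lp.norm_eq_ciSup, h]
  · simp only [lp.norm_eq_tsum_rpow (zero_lt_one.trans_le hp), h]

theorem lp.hasSum_norm_sq (f : lp E 2) : HasSum (fun i => ‖f i‖ ^ 2) (‖f‖ ^ 2) := by
  simpa using lp.hasSum_norm (p := 2) (by norm_num) f

variable {𝕜 : Type*} [RCLike 𝕜] (d : ι → 𝕜)

theorem memℓp_mul_of_norm_eq_one (hd : ∀ i, ‖d i‖ = 1) (x : lp (fun _ : ι => 𝕜) p) :
    Memℓp (fun i => d i * x i) p := by
  rw [← memℓp_norm_iff]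
  simpa only [norm_mul, hd, one_mul] using memℓp_norm_iff.2 (lp.memℓp x)

def lp.diagonalIsometryEquiv [Fact (1 ≤ p)] (hd : ∀ i, ‖d i‖ = 1) :
    lp (fun _ : ι => 𝕜) p ≃ₗᵢ[𝕜] lp (fun _ : ι => 𝕜) p where
  toFun x := ⟨fun i => d i * x i, memℓp_mul_of_norm_eq_one d hd x⟩
  invFun x := ⟨fun i => (d i)⁻¹ * x i,
    memℓp_mul_of_norm_eq_one _ (fun i => by rw [norm_inv, hd, inv_one]) x⟩
  map_add' x y := lp.ext <| funext fun i => mul_add _ _ _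
  map_smul' c x := lp.ext <| funext fun i => mul_left_comm _ _ _
  left_inv x := lp.ext <| funext fun i =>
    inv_mul_cancel_left₀ (norm_ne_zero_iff.1 (by simp [hd])) _
  right_inv x := lp.ext <| funext fun i =>
    mul_inv_cancel_left₀ (norm_ne_zero_iff.1 (by simp [hd])) _
  norm_map' x := lp.norm_eq_of_forall_norm_apply_eq fun i => by simp [norm_mul, hd]

theorem lp.diagonalIsometryEquiv_single [Fact (1 ≤ p)] (hd : ∀ i, ‖d i‖ = 1) [DecidableEq ι]
    (i : ι) (a : 𝕜) :
    lp.diagonalIsometryEquiv d hd (lp.single p i a) = lp.single p i (d i * a) := by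
  ext j
  by_cases h : j = i
  · subst h
    simp [lp.diagonalIsometryEquiv]
  · simp [lp.diagonalIsometryEquiv, lp.single_apply, h]

end lpSpace

theorem e_apply (n k : ℕ) : e n k = if k = n then 1 else 0 := by
  simp [e, lp.single_apply, Pi.single_apply]

theorem inner_e_left (n : ℕ) (x : H) : inner ℂ (e n) x = x n := by
  simp [e, lp.inner_single_left]

theorem norm_e (n : ℕ) : ‖e n‖ = 1 := by
  simp [e, lp.norm_single]

theorem smul_e (c : ℂ) (n : ℕ) : c • e n = lp.single 2 n c := by
  simp [e, ← lp.single_smul]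

theorem ext_e {F : Type*} [AddCommMonoid F] [Module ℂ F] [TopologicalSpace F] [T2Space F]
    {f g : H →L[ℂ] F} (h : ∀ n, f (e n) = g (e n)) : f = g :=
  lp.ext_continuousLinearMap ENNReal.ofNat_ne_top fun n => ContinuousLinearMap.ext_ring (h n)

structure IsCompressedShift (A : H →L[ℂ] H) (a b : ℂ) : Prop where
  apply_e_zero : A (e 0) = a • e 0 + b • e 1
  apply_e_of_one_le : ∀ n, 1 ≤ n → A (e n) = e (n + 1)

namespace IsCompressedShift

variable {A A₁ : H →L[ℂ] H} {a b a₁ b₁ : ℂ}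

theorem apply_apply_zero (hA : IsCompressedShift A a b) (x : H) : A x 0 = a * x 0 := by
  have : (lp.evalCLM ℂ _ 2 0).comp A = a • lp.evalCLM ℂ _ 2 0 := ext_e fun
    | 0 => by
      simp only [ContinuousLinearMap.comp_apply, hA.apply_e_zero, map_add, map_smul]
      simp [lp.evalCLM, e_apply]
    | n + 1 => by simp [hA.apply_e_of_one_le, lp.evalCLM, e_apply]
  exact congr($this x)

theorem apply_apply_one (hA : IsCompressedShift A a b) (x : H) : A x 1 = b * x 0 := by
  have : (lp.evalCLM ℂ _ 2 1).comp A = b • lp.evalCLM ℂ _ 2 0 := ext_e fun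
    | 0 => by
      simp only [ContinuousLinearMap.comp_apply, hA.apply_e_zero, map_add, map_smul]
      simp [lp.evalCLM, e_apply]
    | n + 1 => by simp [hA.apply_e_of_one_le, lp.evalCLM, e_apply]
  exact congr($this x)

theorem apply_apply_add_two (hA : IsCompressedShift A a b) (x : H) (k : ℕ) :
    A x (k + 2) = x (k + 1) := by
  have : (lp.evalCLM ℂ _ 2 (k + 2)).comp A = lp.evalCLM ℂ _ 2 (k + 1) := ext_e fun
    | 0 => by
      simp only [ContinuousLinearMap.comp_apply, hA.apply_e_zero, map_add, map_smul]
      simp [lp.evalCLM, e_apply]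
    | n + 1 => by simp [hA.apply_e_of_one_le, lp.evalCLM, e_apply]
  exact congr($this x)

theorem norm_sq_apply (hA : IsCompressedShift A a b) (x : H) :
    ‖A x‖ ^ 2 = ‖x‖ ^ 2 - (1 - ‖a‖ ^ 2 - ‖b‖ ^ 2) * ‖x 0‖ ^ 2 := by
  have hx : HasSum (fun k => ‖x (k + 1)‖ ^ 2) (‖x‖ ^ 2 - ∑ i ∈ Finset.range 1, ‖x i‖ ^ 2) :=
    (hasSum_nat_add_iff' 1).2 (lp.hasSum_norm_sq x)
  have hAx : HasSum (fun k => ‖A x (k + 2)‖ ^ 2)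
      (‖A x‖ ^ 2 - ∑ i ∈ Finset.range 2, ‖A x i‖ ^ 2) :=
    (hasSum_nat_add_iff' 2).2 (lp.hasSum_norm_sq (A x))
  simp only [hA.apply_apply_add_two] at hAx
  have h := hAx.unique hx
  simp only [Finset.sum_range_succ, Finset.sum_range_zero, hA.apply_apply_zero,
    hA.apply_apply_one, norm_mul, mul_pow] at h
  linear_combination h

theorem defect_mul_norm_sq_eq (hA : IsCompressedShift A a b) (hA₁ : IsCompressedShift A₁ a₁ b₁)
    (U : H ≃ₗᵢ[ℂ] H) (hU : ∀ x, U (A x) = A₁ (U x)) (x : H) :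
    (1 - ‖a‖ ^ 2 - ‖b‖ ^ 2) * ‖x 0‖ ^ 2 = (1 - ‖a₁‖ ^ 2 - ‖b₁‖ ^ 2) * ‖U x 0‖ ^ 2 := by
  have h := hA₁.norm_sq_apply (U x)
  rw [← hU, U.norm_map, U.norm_map, hA.norm_sq_apply] at h
  linarith

end IsCompressedShift

theorem eq_of_forall_mul_norm_sq_apply_zero_eq {δ δ₁ : ℝ} (U : H ≃ₗᵢ[ℂ] H)
    (h : ∀ x : H, δ * ‖x 0‖ ^ 2 = δ₁ * ‖U x 0‖ ^ 2) : δ = δ₁ := by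
  have h₀ := h (e 0)
  have h₁ := h (U.symm (e 0))
  rw [U.apply_symm_apply] at h₁
  have ht := lp.norm_apply_le_norm two_ne_zero (U (e 0)) 0
  have hs := lp.norm_apply_le_norm two_ne_zero (U.symm (e 0)) 0
  rw [LinearIsometryEquiv.norm_map, norm_e] at ht hs
  simp only [e_apply, if_true, norm_one, one_pow, mul_one] at h₀ h₁
  have ht₂ : ‖U (e 0) 0‖ ^ 2 ≤ 1 := pow_le_one₀ (norm_nonneg _) ht
  have hs₂ : ‖U.symm (e 0) 0‖ ^ 2 ≤ 1 := pow_le_one₀ (norm_nonneg _) hs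
  rcases eq_or_ne δ 0 with rfl | hδ
  · simp [← h₁]
  have hts : ‖U (e 0) 0‖ ^ 2 * ‖U.symm (e 0) 0‖ ^ 2 = 1 :=
    mul_left_cancel₀ hδ (by linear_combination ‖U (e 0) 0‖ ^ 2 * h₁ - h₀)
  have ht₁ : ‖U (e 0) 0‖ ^ 2 = 1 := by
    nlinarith [sq_nonneg ‖U (e 0) 0‖, sq_nonneg ‖U.symm (e 0) 0‖]
  rw [h₀, ht₁, mul_one]

theorem exists_apply_e_zero_eq_smul {δ : ℝ} (hδ : δ ≠ 0) (U : H ≃ₗᵢ[ℂ] H)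
    (h : ∀ x : H, δ * ‖x 0‖ ^ 2 = δ * ‖U x 0‖ ^ 2) : ∃ c : ℂ, c ≠ 0 ∧ U (e 0) = c • e 0 := by
  have h₀ : ‖U (e 0) 0‖ = 1 := by
    have h₀ := h (e 0)
    simp only [e_apply, if_true, norm_one, one_pow, mul_one] at h₀
    exact (pow_eq_one_iff_of_nonneg (norm_nonneg _) two_ne_zero).1 ((mul_eq_left₀ hδ).1 h₀.symm)
  have hne : e 0 ≠ 0 := by simp [← norm_ne_zero_iff, norm_e]
  have hCS : ‖inner ℂ (e 0) (U (e 0))‖ = ‖e 0‖ * ‖U (e 0)‖ := by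
    rw [inner_e_left, h₀, U.norm_map, norm_e, one_mul]
  exact (norm_inner_eq_norm_iff hne (by simpa using hne)).1 hCS

theorem eq_of_intertwine_of_apply_e_zero_eq_smul {A A₁ : H →L[ℂ] H} {a b a₁ b₁ c : ℂ}
    (hA0 : A (e 0) = a • e 0 + b • e 1) (hA₁0 : A₁ (e 0) = a₁ • e 0 + b₁ • e 1)
    (U : H ≃ₗᵢ[ℂ] H) (hU : ∀ x, U (A x) = A₁ (U x)) (hc : c ≠ 0) (hUe : U (e 0) = c • e 0) :
    a = a₁ := by
  have hUe₁ : U (e 1) 0 = 0 := by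
    have h := U.inner_map_map (e 0) (e 1)
    rw [hUe, inner_smul_left, inner_e_left, inner_e_left, e_apply] at h
    simpa [hc] using h
  have h := congr($(hU (e 0)) 0)
  simp only [hA0, hA₁0, hUe, map_add, map_smul, lp.coeFn_add, Pi.add_apply, lp.coeFn_smul,
    Pi.smul_apply, smul_eq_mul, hUe₁] at h
  simp only [e_apply, if_true, zero_ne_one, if_false, mul_zero, add_zero, mul_one] at h
  exact mul_right_cancel₀ hc (by linear_combination h)

theorem exists_intertwine_of_norm_eq {A A₁ : H →L[ℂ] H} {a b b₁ : ℂ} (hb : b ≠ 0)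
    (hbb₁ : ‖b‖ = ‖b₁‖) (hA : IsCompressedShift A a b) (hA₁ : IsCompressedShift A₁ a b₁) :
    ∃ U : H ≃ₗᵢ[ℂ] H, ∀ x, U (A x) = A₁ (U x) := by
  let d : ℕ → ℂ := fun n => if n = 0 then 1 else b₁ / b
  have hd : ∀ n, ‖d n‖ = 1 := by
    rintro (_ | n) <;> simp [d, ← hbb₁, hb]
  let U : H ≃ₗᵢ[ℂ] H := lp.diagonalIsometryEquiv d hd
  have hUe : ∀ n, U (e n) = d n • e n := fun n => by
    rw [smul_e, e, lp.diagonalIsometryEquiv_single, mul_one]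
  have hUA : (U.toContinuousLinearEquiv : H →L[ℂ] H).comp A =
      A₁.comp (U.toContinuousLinearEquiv : H →L[ℂ] H) := ext_e fun
    | 0 => by
      simp [hA.apply_e_zero, hA₁.apply_e_zero, hUe, d, smul_smul, mul_div_cancel₀ _ hb]
    | n + 1 => by simp [hA.apply_e_of_one_le, hA₁.apply_e_of_one_le, hUe, d]
  exact ⟨U, fun x => congr($hUA x)⟩

theorem one_sub_norm_sq_mul_conj_sub_norm_sq {α β : ℂ} (h : ‖α‖ ^ 2 + ‖β‖ ^ 2 = 1) :
    1 - ‖α * conj β‖ ^ 2 - ‖β‖ ^ 2 = ‖α‖ ^ 4 := by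
  rw [norm_mul, RCLike.norm_conj]
  linear_combination (-1 - ‖α‖ ^ 2) * h

theorem T_unitary_equivalence_general (α β α₁ β₁ : ℂ)
    (hα : α ≠ 0) (hβ : β ≠ 0)
    (hnorm : ‖α‖ ^ 2 + ‖β‖ ^ 2 = 1)
    (hnorm₁ : ‖α₁‖ ^ 2 + ‖β₁‖ ^ 2 = 1)
    (T T₁ : H →L[ℂ] H)
    (hT0 : T (e 0) = (α * conj β) • e 0 + β • e 1)
    (hTn : ∀ n : ℕ, 1 ≤ n → T (e n) = e (n + 1))
    (hT₁0 : T₁ (e 0) = (α₁ * conj β₁) • e 0 + β₁ • e 1)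
    (hT₁n : ∀ n : ℕ, 1 ≤ n → T₁ (e n) = e (n + 1)) :
    (∃ U : H ≃ₗᵢ[ℂ] H, ∀ x : H, U (T x) = T₁ (U x)) ↔
      (‖α‖ = ‖α₁‖ ∧ ‖β‖ = ‖β₁‖ ∧
        α * conj β = α₁ * conj β₁) := by
  constructor
  · rintro ⟨U, hU⟩
    have hdefect := IsCompressedShift.defect_mul_norm_sq_eq ⟨hT0, hTn⟩ ⟨hT₁0, hT₁n⟩ U hU
    simp only [one_sub_norm_sq_mul_conj_sub_norm_sq hnorm,
      one_sub_norm_sq_mul_conj_sub_norm_sq hnorm₁] at hdefect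
    have h4 : ‖α‖ ^ 4 = ‖α₁‖ ^ 4 := eq_of_forall_mul_norm_sq_apply_zero_eq U hdefect
    have hαα₁ : ‖α‖ = ‖α₁‖ := (pow_left_inj₀ (norm_nonneg _) (norm_nonneg _) four_ne_zero).1 h4
    have hββ₁ : ‖β‖ = ‖β₁‖ := (pow_left_inj₀ (norm_nonneg _) (norm_nonneg _) two_ne_zero).1 <| by
      rw [hαα₁] at hnorm
      linarith
    rw [← h4] at hdefect
    obtain ⟨c, hc, hUe⟩ := exists_apply_e_zero_eq_smul (by positivity) U hdefect
    exact ⟨hαα₁, hββ₁, eq_of_intertwine_of_apply_e_zero_eq_smul hT0 hT₁0 U hU hc hUe⟩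
  · rintro ⟨-, hββ₁, hphase⟩
    rw [← hphase] at hT₁0
    exact exists_intertwine_of_norm_eq hβ hββ₁ ⟨hT0, hTn⟩ ⟨hT₁0, hT₁n⟩

/-- `T_{α,β}` and `T_{α₁,β₁}` are unitarily equivalent iff `|α| = |α₁|`, `|β| = |β₁|`
and `α·conj β = α₁·conj β₁`. -/
theorem T_unitary_equivalence (α β α₁ β₁ : ℂ)
    (hα : α ≠ 0) (hβ : β ≠ 0) (hα₁ : α₁ ≠ 0) (hβ₁ : β₁ ≠ 0)
    (hnorm : ‖α‖ ^ 2 + ‖β‖ ^ 2 = 1)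
    (hnorm₁ : ‖α₁‖ ^ 2 + ‖β₁‖ ^ 2 = 1)
    (T T₁ : H →L[ℂ] H)
    (hT0 : T (e 0) = (α * conj β) • e 0 + β • e 1)
    (hTn : ∀ n : ℕ, 1 ≤ n → T (e n) = e (n + 1))
    (hT₁0 : T₁ (e 0) = (α₁ * conj β₁) • e 0 + β₁ • e 1)
    (hT₁n : ∀ n : ℕ, 1 ≤ n → T₁ (e n) = e (n + 1)) :
    (∃ U : H ≃ₗᵢ[ℂ] H, ∀ x : H, U (T x) = T₁ (U x)) ↔
      (‖α‖ = ‖α₁‖ ∧ ‖β‖ = ‖β₁‖ ∧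
        α * conj β = α₁ * conj β₁) :=
  T_unitary_equivalence_general α β α₁ β₁ hα hβ hnorm hnorm₁ T T₁ hT0 hTn hT₁0 hT₁n

end
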